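/- Let A be a Q-algebra and let B be a connected nonnegatively graded commutative Hopf algebra over A arising from a G_a-module structure (so the comultiplication interacts with the A[t]-coaction as required). Then B is generated as an A-algebra by its degree-1 elements; equivalently, the natural graded Hopf algebra map Sym_A(B_1) → B is surjective. -/

import Mathlib

/-!
Take the `(1, i)` bidegree component of the comultiplication of a homogeneous `b` of degree
`i + 1` and multiply it out: by the `G_a`-identity this gives `(i + 1) • b`, and it lies in
`B₁ * Bᵢ`. As `i + 1` is invertible over `ℚ`, induction on the degree gives `Bᵢ ≤ B₁ ^ i`,
and `B` is the sum of its homogeneous components.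
-/

open TensorProduct

theorem Submodule.mem_of_nsmul_mem {R M : Type*} [Semiring R] [Algebra ℚ R] [AddCommMonoid M]
    [Module R M] (p : Submodule R M) {n : ℕ} (hn : n ≠ 0) {x : M} (h : n • x ∈ p) : x ∈ p := by
  have hunit : IsUnit (n : R) := by
    simpa using (IsUnit.mk0 (n : ℚ) (Nat.cast_ne_zero.2 hn)).map (algebraMap ℚ R)
  rwa [← Nat.cast_smul_eq_nsmul R, p.smul_mem_iff_of_isUnit hunit] at h

theorem LinearMap.mul'_map_mem_mul {R A M N : Type*} [CommSemiring R] [Semiring A] [Algebra R A]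
    [AddCommMonoid M] [Module R M] [AddCommMonoid N] [Module R N] {P Q : Submodule R A}
    {f : M →ₗ[R] A} {g : N →ₗ[R] A} (hf : ∀ m, f m ∈ P) (hg : ∀ n, g n ∈ Q) (x : M ⊗[R] N) :
    LinearMap.mul' R A (map f g x) ∈ P * Q := by
  induction x using TensorProduct.induction_on with
  | zero => simp
  | tmul m n => simpa using Submodule.mul_mem_mul (hf m) (hg n)
  | add x y hx hy => simpa using add_mem hx hy

theorem Submodule.le_pow_of_nsmul_mem_mul {R A : Type*} [CommSemiring R] [Algebra ℚ R]
    [Semiring A] [Algebra R A] (ℬ : ℕ → Submodule R A) (h0 : ℬ 0 ≤ 1)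
    (hsucc : ∀ i, ∀ b ∈ ℬ (i + 1), (i + 1) • b ∈ ℬ 1 * ℬ i) (i : ℕ) : ℬ i ≤ ℬ 1 ^ i := by
  induction i with
  | zero => simpa using h0
  | succ i ih =>
    intro b hb
    refine (ℬ 1 ^ (i + 1)).mem_of_nsmul_mem i.succ_ne_zero ?_
    rw [pow_succ']
    exact mul_le_mul_right ih (ℬ 1) (hsucc i b hb)

theorem Submodule.pow_le_toSubmodule_adjoin {R A : Type*} [CommSemiring R] [Semiring A]
    [Algebra R A] (M : Submodule R A) (n : ℕ) :
    M ^ n ≤ Subalgebra.toSubmodule (Algebra.adjoin R (M : Set A)) :=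
  fun _ hx ↦ Submodule.pow_induction_on_left M (C := (· ∈ Algebra.adjoin R (M : Set A)))
    (Subalgebra.algebraMap_mem _) (fun _ _ ↦ add_mem)
    (fun _ hm _ ↦ mul_mem (Algebra.subset_adjoin hm)) hx

theorem GradedAlgebra.adjoin_eq_top_of_le_pow {R A : Type*} [CommSemiring R] [Semiring A]
    [Algebra R A] (ℬ : ℕ → Submodule R A) [GradedAlgebra ℬ] (h : ∀ i, ℬ i ≤ ℬ 1 ^ i) :
    Algebra.adjoin R (ℬ 1 : Set A) = ⊤ := by
  rw [← Algebra.toSubmodule_eq_top, eq_top_iff,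
    ← (DirectSum.Decomposition.isInternal ℬ).submodule_iSup_eq_top, iSup_le_iff]
  exact fun i ↦ (h i).trans ((ℬ 1).pow_le_toSubmodule_adjoin i)

theorem gaModule_generated_in_degree_one_general
    {A B : Type*} [CommRing A] [Algebra ℚ A] [CommRing B] [HopfAlgebra A B]
    (ℬ : ℕ → Submodule A B) [GradedAlgebra ℬ]
    (hconn : ℬ 0 = LinearMap.range (Algebra.linearMap A B))
    (hGa : ∀ (i : ℕ) (b : B), b ∈ ℬ i → ∀ j k : ℕ, j + k = i →
      LinearMap.mul' A B
        (TensorProduct.map (GradedAlgebra.proj ℬ j) (GradedAlgebra.proj ℬ k)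
          (Coalgebra.comul (R := A) b)) = (i.choose j) • b) :
    Algebra.adjoin A (ℬ 1 : Set B) = ⊤ := by
  have hproj (j : ℕ) (x : B) : GradedAlgebra.proj ℬ j x ∈ ℬ j :=
    SetLike.coe_mem (DirectSum.decompose ℬ x j)
  refine GradedAlgebra.adjoin_eq_top_of_le_pow ℬ <|
    Submodule.le_pow_of_nsmul_mem_mul ℬ (hconn.trans Submodule.one_eq_range.symm).le ?_
  intro i b hb
  rw [← Nat.choose_one_right (i + 1), ← hGa (i + 1) b hb 1 i (add_comm 1 i)]
  exact LinearMap.mul'_map_mem_mul (hproj 1) (hproj i) _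

/-- Let `A` be a `ℚ`-algebra and `B` a connected nonnegatively graded
commutative Hopf algebra over `A` arising from a `G_a`-module structure.  The `G_a`-module
condition is encoded by the identity `b·(t₁+t₂)^i = Σ t₁^j t₂^k (components of comul b)`,
i.e. for homogeneous `b` of degree `i` and `j + k = i`, multiplying the `(j,k)`-bidegree
component of `comul b` yields `binom(i,j) • b`.  Then `B` is generated as an `A`-algebra
by its degree-one elements. -/
theorem gaModule_generated_in_degree_one
    {A B : Type*} [CommRing A] [Algebra ℚ A] [CommRing B] [HopfAlgebra A B]
    (ℬ : ℕ → Submodule A B) [GradedAlgebra ℬ]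
    (hconn : ℬ 0 = LinearMap.range (Algebra.linearMap A B))
    (hinj : Function.Injective (algebraMap A B))
    (hcomul : ∀ (i : ℕ) (b : B), b ∈ ℬ i → ∀ j k : ℕ, j + k ≠ i →
      TensorProduct.map (GradedAlgebra.proj ℬ j) (GradedAlgebra.proj ℬ k)
        (Coalgebra.comul (R := A) b) = 0)
    (hGa : ∀ (i : ℕ) (b : B), b ∈ ℬ i → ∀ j k : ℕ, j + k = i →
      LinearMap.mul' A B
        (TensorProduct.map (GradedAlgebra.proj ℬ j) (GradedAlgebra.proj ℬ k)
          (Coalgebra.comul (R := A) b)) = (i.choose j) • b) :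
    Algebra.adjoin A (ℬ 1 : Set B) = ⊤ :=
  gaModule_generated_in_degree_one_general ℬ hconn hGa
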